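/- For every 3-coloring of the edges of the transitive tournament on {1,...,n}, there exists a directed path with at least ⌈√n⌉ vertices which entirely avoids at least one of the three colors. -/
import Mathlib

def col' (n : ℕ) (col : Fin n → Fin n → Fin 3) (j k : ℕ) : Fin 3 :=
  if h : j < n ∧ k < n then col ⟨j, h.1⟩ ⟨k, h.2⟩ else 0

def pathLen (n : ℕ) (col : Fin n → Fin n → Fin 3) (c : Fin 3) (k : ℕ) : ℕ :=
  1 + ((Finset.range k).attach.filter (fun j => col' n col j.1 k ≠ c)).sup
        (fun j => pathLen n col c j.1)
termination_by k
decreasing_by exact Finset.mem_range.mp j.2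

theorem pathLen_lt (n : ℕ) (col : Fin n → Fin n → Fin 3) (c : Fin 3) {j k : ℕ}
    (hjk : j < k) (hc : col' n col j k ≠ c) : pathLen n col c j < pathLen n col c k := by
  conv_rhs => rw [pathLen]
  have hmem : (⟨j, Finset.mem_range.mpr hjk⟩ : {x // x ∈ Finset.range k}) ∈
      (Finset.range k).attach.filter (fun j => col' n col j.1 k ≠ c) :=
    Finset.mem_filter.mpr ⟨Finset.mem_attach _ _, hc⟩
  have : pathLen n col c j ≤ _ := Finset.le_sup (f := fun j => pathLen n col c j.1) hmem
  omega

theorem pathLen_pos (n : ℕ) (col : Fin n → Fin n → Fin 3) (c : Fin 3) (k : ℕ) :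
    1 ≤ pathLen n col c k := by rw [pathLen]; omega

theorem pathLen_spec (n : ℕ) (col : Fin n → Fin n → Fin 3) (c : Fin 3) :
    ∀ k, k < n → ∀ hk : k < n, ∃ s : Fin (pathLen n col c k) → Fin n,
      StrictMono s ∧ (∀ i, (s i).1 ≤ k) ∧
      (∀ i : Fin (pathLen n col c k), i.1 = pathLen n col c k - 1 → s i = ⟨k, hk⟩) ∧
      ∀ (i : ℕ) (h : i + 1 < pathLen n col c k),
        col (s ⟨i, by omega⟩) (s ⟨i + 1, h⟩) ≠ c := by
  intro k
  induction k using Nat.strong_induction_on with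
  | _ k ih =>
    intro hkn hk
    have hfk : pathLen n col c k = 1 + ((Finset.range k).attach.filter
        (fun j => col' n col j.1 k ≠ c)).sup (fun j => pathLen n col c j.1) := by
      conv_lhs => rw [pathLen]
    set S := (Finset.range k).attach.filter (fun j => col' n col j.1 k ≠ c) with hS
    by_cases hSne : S.Nonempty
    · obtain ⟨j, hjS, hjm⟩ := Finset.exists_mem_eq_sup S hSne (fun j => pathLen n col c j.1)
      rw [hjm] at hfk
      have hjk : j.1 < k := Finset.mem_range.mp j.2
      have hjn : j.1 < n := hjk.trans hkn
      have hcjk : col' n col j.1 k ≠ c := (Finset.mem_filter.mp hjS).2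
      have hcol : col ⟨j.1, hjn⟩ ⟨k, hk⟩ ≠ c := by
        simpa [col', dif_pos (And.intro hjn hk)] using hcjk
      obtain ⟨sj, monoj, boundj, lastj, avoidj⟩ := ih j.1 hjk hjn hjn
      have hP : 1 ≤ pathLen n col c j.1 := pathLen_pos n col c j.1
      refine ⟨fun i => if h : i.1 < pathLen n col c j.1 then sj ⟨i.1, h⟩ else ⟨k, hk⟩,
        ?_, ?_, ?_, ?_⟩
      · intro a b hab
        have hab' : a.1 < b.1 := hab
        have ha2 := a.2; have hb2 := b.2
        by_cases ha : a.1 < pathLen n col c j.1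
        · by_cases hb : b.1 < pathLen n col c j.1
          · simp only [dif_pos ha, dif_pos hb]
            exact monoj (show (⟨a.1, ha⟩ : Fin _) < ⟨b.1, hb⟩ from hab')
          · simp only [dif_pos ha, dif_neg hb]
            exact Fin.mk_lt_mk.mpr (lt_of_le_of_lt (boundj ⟨a.1, ha⟩) hjk)
        · have hb : ¬ b.1 < pathLen n col c j.1 := by omega
          omega
      · intro i
        by_cases hi : i.1 < pathLen n col c j.1
        · simp only [dif_pos hi]; exact le_of_lt (lt_of_le_of_lt (boundj _) hjk)
        · simp only [dif_neg hi]; exact le_rfl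
      · intro i hi
        have : ¬ i.1 < pathLen n col c j.1 := by omega
        simp only [dif_neg this]
      · intro i h
        have hi : i < pathLen n col c j.1 := by omega
        by_cases hi1 : i + 1 < pathLen n col c j.1
        · simp only [dif_pos hi, dif_pos hi1]
          exact avoidj i hi1
        · have hieq : i = pathLen n col c j.1 - 1 := by omega
          simp only [dif_pos hi, dif_neg hi1]
          rw [lastj ⟨i, hi⟩ hieq]
          exact hcol
    · rw [Finset.not_nonempty_iff_eq_empty] at hSne
      rw [hSne, Finset.sup_empty] at hfk
      have hone : pathLen n col c k = 1 := by simpa using hfk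
      refine ⟨fun _ => ⟨k, hk⟩, ?_, fun _ => le_refl k, fun _ _ => rfl, ?_⟩
      · intro a b hab
        have ha := a.2; have hb := b.2
        have : a.1 < b.1 := hab
        omega
      · intro i h; omega

/-- Every 3-coloring of the edges of the transitive tournament on `n` vertices
contains a directed path with at least `⌈√n⌉` vertices avoiding at least one color. -/
theorem three_color_avoiding_path (n : ℕ) (col : Fin n → Fin n → Fin 3) :
    ∃ s : Fin ⌈Real.sqrt n⌉₊ → Fin n, StrictMono s ∧
      ∃ c : Fin 3, ∀ (i : ℕ) (h : i + 1 < ⌈Real.sqrt n⌉₊),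
        col (s ⟨i, by omega⟩) (s ⟨i + 1, h⟩) ≠ c := by
  rcases Nat.eq_zero_or_pos n with hn | hn
  · subst hn
    have h0 : ⌈Real.sqrt (0:ℕ)⌉₊ = 0 := by simp
    refine ⟨fun i => absurd i.2 (by omega), fun a _ _ => absurd a.2 (by omega), 0,
      fun i h => absurd h (by omega)⟩
  · set F : Fin 3 → ℕ := fun c => Finset.univ.sup (fun v : Fin n => pathLen n col c v.1)
      with hF
    have hle : ∀ (c : Fin 3) (v : Fin n), pathLen n col c v.1 ≤ F c := fun c v =>
      Finset.le_sup (f := fun v : Fin n => pathLen n col c v.1) (Finset.mem_univ v)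
    have hpos : ∀ (c : Fin 3) (v : Fin n), 1 ≤ pathLen n col c v.1 := fun c v =>
      pathLen_pos n col c v.1
    have key : ∀ u v : Fin n, u.1 < v.1 →
        pathLen n col 0 u.1 < pathLen n col 0 v.1 ∨
        pathLen n col 1 u.1 < pathLen n col 1 v.1 := by
      intro u v huv
      have hcc : col' n col u.1 v.1 = col u v := by
        simp [col', u.isLt, v.isLt]
      by_cases h0 : col u v = 0
      · right
        exact pathLen_lt n col 1 huv (by rw [hcc, h0]; decide)
      · left
        exact pathLen_lt n col 0 huv (by rw [hcc]; exact h0)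
    have hinj : Function.Injective (fun v : Fin n =>
        ((⟨pathLen n col 0 v.1 - 1, by have := hle 0 v; have := hpos 0 v; omega⟩ : Fin (F 0)),
         (⟨pathLen n col 1 v.1 - 1, by have := hle 1 v; have := hpos 1 v; omega⟩ : Fin (F 1)))) := by
      intro u v heq
      simp only [Prod.mk.injEq, Fin.mk.injEq] at heq
      have h1 := hpos 0 u; have h2 := hpos 0 v; have h3 := hpos 1 u; have h4 := hpos 1 v
      rcases lt_trichotomy u.1 v.1 with h | h | h
      · rcases key u v h with hk | hk <;> omega
      · exact Fin.ext h
      · rcases key v u h with hk | hk <;> omega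
    have hcard : n ≤ F 0 * F 1 := by
      have := Fintype.card_le_of_injective _ hinj
      simpa using this
    have hM : ⌈Real.sqrt n⌉₊ ≤ max (F 0) (F 1) := by
      rw [Nat.ceil_le]
      have h1 : n ≤ max (F 0) (F 1) * max (F 0) (F 1) :=
        hcard.trans (Nat.mul_le_mul (le_max_left _ _) (le_max_right _ _))
      have h2 : (n : ℝ) ≤ ((max (F 0) (F 1) : ℕ) : ℝ) ^ 2 := by
        rw [sq]; exact_mod_cast h1
      calc Real.sqrt n ≤ Real.sqrt (((max (F 0) (F 1) : ℕ) : ℝ) ^ 2) := Real.sqrt_le_sqrt h2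
        _ = ((max (F 0) (F 1) : ℕ) : ℝ) := Real.sqrt_sq (by positivity)
    obtain ⟨c, hc⟩ : ∃ c : Fin 3, ⌈Real.sqrt n⌉₊ ≤ F c := by
      rcases le_total (F 0) (F 1) with h | h
      · exact ⟨1, by rw [max_eq_right h] at hM; exact hM⟩
      · exact ⟨0, by rw [max_eq_left h] at hM; exact hM⟩
    have huniv : (Finset.univ : Finset (Fin n)).Nonempty := by
      simpa [Finset.univ_nonempty_iff, ← Fin.pos_iff_nonempty] using hn
    obtain ⟨v, -, hv⟩ := Finset.exists_mem_eq_sup (Finset.univ : Finset (Fin n)) huniv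
      (fun v : Fin n => pathLen n col c v.1)
    have hL : ⌈Real.sqrt n⌉₊ ≤ pathLen n col c v.1 := hc.trans (le_of_eq hv)
    obtain ⟨s, mono, -, -, avoid⟩ := pathLen_spec n col c v.1 v.isLt v.isLt
    refine ⟨fun i => s (Fin.castLE hL i), ?_, c, ?_⟩
    · intro a b hab
      exact mono (show Fin.castLE hL a < Fin.castLE hL b from hab)
    · intro i h
      exact avoid i (by omega)
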